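/- Let d ≥ 2 and let s and t be n-tuples of transpositions in S_d = Equiv.Perm (Fin d), each of which is transitive (the subgroup generated by the entries acts transitively on Fin d), and suppose their total monodromies are equal: s_1 s_2 ⋯ s_n = t_1 t_2 ⋯ t_n. Then s and t are Hurwitz equivalent: some finite composition of Hurwitz moves H_i and their inverses carries s to t. (This is the algebraic content of the paper's claim in Section 3 that, for fixed n and d, the coloured braid groupoid splits into connected components indexed by the total monodromy μ, so that the set T(μ) of labelings with product μ forms a single connected component.) -/

import Mathlib

/-- The `i`-th Hurwitz move on `n`-tuples in a group `G` (indices `0`-based: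
this acts on the entries at positions `i` and `i+1`): it replaces the pair
`(a, b)` at positions `(i, i+1)` by `(a * b * a⁻¹, a)` and leaves all other
entries unchanged. -/
def hmove {G : Type*} [Group G] {n : ℕ} (i : ℕ) (hi : i + 1 < n) (t : Fin n → G) :
    Fin n → G := fun j =>
  if (j : ℕ) = i then t ⟨i, by omega⟩ * t ⟨i + 1, hi⟩ * (t ⟨i, by omega⟩)⁻¹
  else if (j : ℕ) = i + 1 then t ⟨i, by omega⟩
  else t j

/-- One elementary Hurwitz step between tuples: applying a single Hurwitz move
or the inverse of a single Hurwitz move. -/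
def hstep {G : Type*} [Group G] {n : ℕ} (s t : Fin n → G) : Prop :=
  ∃ (i : ℕ) (hi : i + 1 < n), t = hmove i hi s ∨ s = hmove i hi t

/-- Two tuples are Hurwitz equivalent if some finite composition of Hurwitz
moves and their inverses carries one to the other. -/
def HurwitzEquiv {G : Type*} [Group G] {n : ℕ} (s t : Fin n → G) : Prop :=
  Relation.ReflTransGen hstep s t

/-!
Induction on the number of points. Fix a point `ω`. Hurwitz moves gather the transpositions
moving `ω` at the front. Two adjacent distinct ones `(a ω)(b ω)` become `(a b)(a ω)`; a repeated
pair `(a ω)(a ω)` of involutions commutes with and can be conjugated by any later entry, so when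
a further transposition moves `ω` it can be turned into a pair fixing `ω`. What is left in front
is a single `(μ(ω) ω)` or a pair `(a ω)(a ω)`, according as the monodromy `μ` moves `ω` or not,
and in the pair case `a` can be fixed by conjugating with the rest. The remaining entries fix `ω`,
generate a group transitive on the other points and have equal products, so induction applies.
With at most two points all transpositions coincide.
-/

open Equiv Equiv.Perm

section Group

variable {G : Type*} [Group G]

theorem Subgroup.closure_pair_conj (a b : G) :
    Subgroup.closure {a, b} = Subgroup.closure {a * b * a⁻¹, a} := by
  apply le_antisymm <;>
    rw [Subgroup.closure_le, Set.insert_subset_iff, Set.singleton_subset_iff] <;>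
    simp only [SetLike.mem_coe]
  · have ha : a ∈ Subgroup.closure {a * b * a⁻¹, a} := Subgroup.subset_closure (by simp)
    have hc : a * b * a⁻¹ ∈ Subgroup.closure {a * b * a⁻¹, a} := Subgroup.subset_closure (by simp)
    exact ⟨ha, by simpa [mul_assoc] using mul_mem (mul_mem (inv_mem ha) hc) ha⟩
  · have ha : a ∈ Subgroup.closure {a, b} := Subgroup.subset_closure (by simp)
    have hb : b ∈ Subgroup.closure {a, b} := Subgroup.subset_closure (by simp)
    exact ⟨mul_mem (mul_mem ha hb) (inv_mem ha), ha⟩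

theorem conj_mul_conj_eq_one {a : G} (ha : a * a = 1) (h : G) :
    h * a * h⁻¹ * (h * a * h⁻¹) = 1 := by
  simp [mul_assoc, ← mul_assoc a a, ha]

def ListHurwitzMove (l l' : List G) : Prop :=
  ∃ l₁ a b l₂, l = l₁ ++ a :: b :: l₂ ∧ l' = l₁ ++ (a * b * a⁻¹) :: a :: l₂

def ListHurwitzEquiv : List G → List G → Prop := Relation.EqvGen ListHurwitzMove

infix:50 " ≈ₕ " => ListHurwitzEquiv

namespace ListHurwitzEquiv

@[refl] theorem refl (l : List G) : l ≈ₕ l := Relation.EqvGen.refl l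

@[symm] theorem symm {l l' : List G} (h : l ≈ₕ l') : l' ≈ₕ l := Relation.EqvGen.symm _ _ h

theorem trans {l l' l'' : List G} (h : l ≈ₕ l') (h' : l' ≈ₕ l'') : l ≈ₕ l'' :=
  Relation.EqvGen.trans _ _ _ h h'

instance : @Trans (List G) (List G) (List G) (· ≈ₕ ·) (· ≈ₕ ·) (· ≈ₕ ·) := ⟨trans⟩

theorem move (a b : G) (l : List G) : a :: b :: l ≈ₕ (a * b * a⁻¹) :: a :: l :=
  Relation.EqvGen.rel _ _ ⟨[], a, b, l, rfl, rfl⟩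

theorem invariant {β : Type*} (f : List G → β)
    (hf : ∀ l₁ a b l₂, f (l₁ ++ a :: b :: l₂) = f (l₁ ++ (a * b * a⁻¹) :: a :: l₂))
    {l l' : List G} (h : l ≈ₕ l') : f l = f l' :=
  congrArg (Quot.lift f (by rintro _ _ ⟨l₁, a, b, l₂, rfl, rfl⟩; exact hf l₁ a b l₂))
    (Quot.eqvGen_sound h)

theorem congr_of_move {H : Type*} [Group H] (f : List G → List H)
    (hf : ∀ l₁ a b l₂, f (l₁ ++ a :: b :: l₂) ≈ₕ f (l₁ ++ (a * b * a⁻¹) :: a :: l₂))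
    {l l' : List G} (h : l ≈ₕ l') : f l ≈ₕ f l' := by
  induction h with
  | rel _ _ hm => obtain ⟨l₁, a, b, l₂, rfl, rfl⟩ := hm; exact hf l₁ a b l₂
  | refl => rfl
  | symm _ _ _ ih => exact ih.symm
  | trans _ _ _ _ _ ih ih' => exact ih.trans ih'

theorem append_left (p : List G) {l l' : List G} (h : l ≈ₕ l') : p ++ l ≈ₕ p ++ l' :=
  congr_of_move (p ++ ·) (fun l₁ a b l₂ => Relation.EqvGen.rel _ _
    ⟨p ++ l₁, a, b, l₂, by simp, by simp⟩) h

theorem cons (a : G) {l l' : List G} (h : l ≈ₕ l') : a :: l ≈ₕ a :: l' :=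
  h.append_left [a]

theorem append_right (q : List G) {l l' : List G} (h : l ≈ₕ l') : l ++ q ≈ₕ l' ++ q :=
  congr_of_move (· ++ q) (fun l₁ a b l₂ => Relation.EqvGen.rel _ _
    ⟨l₁, a, b, l₂ ++ q, by simp, by simp⟩) h

theorem map {H : Type*} [Group H] (φ : G →* H) {l l' : List G} (h : l ≈ₕ l') :
    l.map φ ≈ₕ l'.map φ :=
  congr_of_move (List.map φ) (fun l₁ a b l₂ => Relation.EqvGen.rel _ _
    ⟨l₁.map φ, φ a, φ b, l₂.map φ, by simp, by simp⟩) h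

theorem length_eq {l l' : List G} (h : l ≈ₕ l') : l.length = l'.length :=
  h.invariant List.length fun _ _ _ _ => by simp

theorem prod_eq {l l' : List G} (h : l ≈ₕ l') : l.prod = l'.prod :=
  h.invariant List.prod fun _ _ _ _ => by simp [mul_assoc]

theorem closure_eq {l l' : List G} (h : l ≈ₕ l') :
    Subgroup.closure {x | x ∈ l} = Subgroup.closure {x | x ∈ l'} := by
  refine h.invariant (fun l => Subgroup.closure {x | x ∈ l}) fun l₁ a b l₂ => ?_
  have hsplit : ∀ x y : G, {z | z ∈ l₁ ++ x :: y :: l₂} = {x, y} ∪ {z | z ∈ l₁ ++ l₂} := by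
    intro x y; ext z
    simp only [Set.mem_ofPred_eq, Set.mem_union, Set.mem_insert_iff, Set.mem_singleton_iff,
      List.mem_append, List.mem_cons]
    tauto
  rw [hsplit, hsplit, Subgroup.closure_union, Subgroup.closure_union,
    Subgroup.closure_pair_conj]

theorem forall_mem_iff {P : G → Prop} (hP : ∀ g x, P x → P (g * x * g⁻¹))
    {l l' : List G} (h : l ≈ₕ l') : (∀ x ∈ l, P x) ↔ (∀ x ∈ l', P x) := by
  refine Iff.of_eq (h.invariant (fun l => ∀ x ∈ l, P x) fun l₁ a b l₂ => propext ?_)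
  have hb : P (a * b * a⁻¹) ↔ P b := ⟨fun h => by simpa [mul_assoc] using hP a⁻¹ _ h, hP a b⟩
  simp only [List.mem_append, List.mem_cons, or_imp, forall_and, forall_eq, hb]
  tauto

theorem cons_map_conj (a : G) (l : List G) :
    a :: l ≈ₕ l.map (fun x => a * x * a⁻¹) ++ [a] := by
  induction l with
  | nil => rfl
  | cons b l ih => exact (move a b l).trans (ih.cons _)

theorem pair_cons {a : G} (ha : a * a = 1) (b : G) (l : List G) :
    a :: a :: b :: l ≈ₕ b :: a :: a :: l := by
  have hb : a * (a * b * a⁻¹) * a⁻¹ = b := by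
    rw [← mul_eq_one_iff_eq_inv.mp ha]; simp [mul_assoc, ← mul_assoc a a, ha]
  calc a :: a :: b :: l ≈ₕ a :: (a * b * a⁻¹) :: a :: l := (move a b l).cons a
    _ ≈ₕ b :: a :: a :: l := by simpa only [hb] using move a (a * b * a⁻¹) (a :: l)

theorem pair_append {a : G} (ha : a * a = 1) (p q : List G) :
    a :: a :: (p ++ q) ≈ₕ p ++ a :: a :: q := by
  induction p with
  | nil => rfl
  | cons b p ih => exact (pair_cons ha b _).trans (ih.cons b)

theorem pair_cons_conj (a c : G) (l : List G) :
    a :: a :: c :: l ≈ₕ c :: (c⁻¹ * a * c) :: (c⁻¹ * a * c) :: l := by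
  symm
  calc c :: (c⁻¹ * a * c) :: (c⁻¹ * a * c) :: l ≈ₕ a :: c :: (c⁻¹ * a * c) :: l := by
        simpa [mul_assoc] using move c (c⁻¹ * a * c) ((c⁻¹ * a * c) :: l)
    _ ≈ₕ a :: a :: c :: l := by simpa [mul_assoc] using (move c (c⁻¹ * a * c) l).cons a

theorem pair_conj_of_mem {a c : G} (ha : a * a = 1) {l : List G} (hc : c ∈ l) :
    a :: a :: l ≈ₕ (c⁻¹ * a * c) :: (c⁻¹ * a * c) :: l := by
  obtain ⟨p, q, rfl⟩ := List.append_of_mem hc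
  have ha' := conj_mul_conj_eq_one ha c⁻¹
  simp only [inv_inv] at ha'
  calc a :: a :: (p ++ c :: q) ≈ₕ p ++ a :: a :: c :: q := pair_append ha p _
    _ ≈ₕ p ++ c :: (c⁻¹ * a * c) :: (c⁻¹ * a * c) :: q := (pair_cons_conj a c q).append_left p
    _ ≈ₕ p ++ (c⁻¹ * a * c) :: (c⁻¹ * a * c) :: c :: q := ((pair_cons ha' c q).symm).append_left p
    _ ≈ₕ (c⁻¹ * a * c) :: (c⁻¹ * a * c) :: (p ++ c :: q) := (pair_append ha' p _).symm

theorem pair_conj_of_mem_closure {l : List G} {g : G} (hg : g ∈ Subgroup.closure {x | x ∈ l})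
    {a : G} (ha : a * a = 1) : a :: a :: l ≈ₕ (g * a * g⁻¹) :: (g * a * g⁻¹) :: l := by
  induction hg using Subgroup.closure_induction generalizing a with
  | mem c hc => simpa [mul_assoc] using (pair_conj_of_mem (conj_mul_conj_eq_one ha c) hc).symm
  | one => simp only [one_mul, inv_one, mul_one]; rfl
  | mul g h _ _ ihg ihh =>
    simpa [mul_assoc] using (ihh ha).trans (ihg (conj_mul_conj_eq_one ha h))
  | inv g _ ihg => simpa [mul_assoc] using (ihg (conj_mul_conj_eq_one ha g⁻¹)).symm

end ListHurwitzEquiv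

-- Only applied to lists of length `n`, where the default `1` is never used.
def tupleOfList (n : ℕ) (l : List G) : Fin n → G := fun j => l.getD j 1

theorem tupleOfList_ofFn {n : ℕ} (s : Fin n → G) : tupleOfList n (List.ofFn s) = s := by
  funext j
  simp [tupleOfList]

theorem tupleOfList_move {n : ℕ} (l₁ : List G) (a b : G) (l₂ : List G)
    (hn : l₁.length + 1 < n) :
    tupleOfList n (l₁ ++ (a * b * a⁻¹) :: a :: l₂) =
      hmove l₁.length hn (tupleOfList n (l₁ ++ a :: b :: l₂)) := by
  funext j
  simp only [tupleOfList, hmove]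
  split_ifs with h₁ h₂
  · simp [h₁]
  · simp [h₂]
  · rcases lt_or_gt_of_ne h₁ with hj | hj
    · simp [List.getElem?_append_left hj]
    · obtain ⟨k, hk⟩ : ∃ k, (j : ℕ) = l₁.length + (k + 2) := ⟨j - l₁.length - 2, by omega⟩
      simp [hk, List.getElem?_append_right]

theorem HurwitzEquiv.symm {n : ℕ} {s t : Fin n → G} (h : HurwitzEquiv s t) :
    HurwitzEquiv t s := by
  induction h with
  | refl => exact .refl
  | tail _ hst ih =>
    obtain ⟨i, hi, h⟩ := hst
    exact .head ⟨i, hi, h.symm⟩ ih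

theorem ListHurwitzEquiv.hurwitzEquiv_tupleOfList {n : ℕ} {l l' : List G} (h : l ≈ₕ l')
    (hn : l.length = n) : HurwitzEquiv (tupleOfList n l) (tupleOfList n l') := by
  induction h generalizing n with
  | rel _ _ hm =>
    obtain ⟨l₁, a, b, l₂, rfl, rfl⟩ := hm
    have hi : l₁.length + 1 < n := by simp only [List.length_append, List.length_cons] at hn; omega
    exact .single ⟨l₁.length, hi, Or.inl (tupleOfList_move l₁ a b l₂ hi)⟩
  | refl => exact .refl
  | symm _ _ h ih => exact (ih ((ListHurwitzEquiv.length_eq h).trans hn)).symm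
  | trans _ _ _ h _ ih ih' =>
    exact (ih hn).trans (ih' (ListHurwitzEquiv.length_eq h ▸ hn))

end Group

section Closure

variable {α : Type*}

theorem Equiv.Perm.apply_eq_of_mem_closure {S : Set (Perm α)} {ω : α} (hS : ∀ g ∈ S, g ω = ω)
    {p : Perm α} (hp : p ∈ Subgroup.closure S) : p ω = ω :=
  (Subgroup.closure_le (MulAction.stabilizer (Perm α) ω)).2 hS hp

theorem Equiv.Perm.list_prod_apply_eq_self {ω : α} {m : List (Perm α)} (hm : ∀ y ∈ m, y ω = ω) :
    m.prod ω = ω :=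
  apply_eq_of_mem_closure hm (Subgroup.list_prod_mem _ fun _ hx => Subgroup.subset_closure hx)

theorem Equiv.Perm.rel_apply_of_mem_closure (r : Setoid α) {S : Set (Perm α)}
    (hS : ∀ g ∈ S, ∀ x, r (g x) x) {p : Perm α} (hp : p ∈ Subgroup.closure S) (x : α) :
    r (p x) x := by
  induction hp using Subgroup.closure_induction generalizing x with
  | mem g hg => exact hS g hg x
  | one => exact r.refl x
  | mul g h _ _ ihg ihh => exact r.trans (ihg (h x)) (ihh x)
  | inv g _ ihg => simpa using r.symm (ihg (g⁻¹ x))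

theorem Equiv.Perm.conj_apply_ne_iff {g x : Perm α} {ω : α} (hg : g ω = ω) :
    (g * x * g⁻¹) ω ≠ ω ↔ x ω ≠ ω := by
  have : g⁻¹ ω = ω := by rw [Perm.inv_eq_iff_eq, hg]
  rw [Perm.mul_apply, Perm.mul_apply, this]
  exact g.injective.ne_iff' hg

def GeneratesTransitive (l : List (Perm α)) : Prop :=
  ∀ x y : α, ∃ p ∈ Subgroup.closure {g | g ∈ l}, p x = y

theorem GeneratesTransitive.mono {l l' : List (Perm α)} (h : l ⊆ l')
    (hl : GeneratesTransitive l) : GeneratesTransitive l' := fun x y =>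
  let ⟨p, hp, hpxy⟩ := hl x y
  ⟨p, Subgroup.closure_mono (fun _ hg => h hg) hp, hpxy⟩

theorem ListHurwitzEquiv.generatesTransitive_iff {l l' : List (Perm α)} (h : l ≈ₕ l') :
    GeneratesTransitive l ↔ GeneratesTransitive l' := by
  simp only [GeneratesTransitive, h.closure_eq]

theorem GeneratesTransitive.exists_apply_ne {l : List (Perm α)} (hl : GeneratesTransitive l)
    {ω v : α} (hv : v ≠ ω) : ∃ x ∈ l, x ω ≠ ω := by
  by_contra! h
  obtain ⟨p, hp, hpv⟩ := hl ω v
  exact hv (hpv ▸ apply_eq_of_mem_closure h hp)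

end Closure

section Swap

variable {α : Type*} [DecidableEq α]

theorem Equiv.Perm.IsSwap.conj {x : Perm α} (hx : x.IsSwap) (g : Perm α) :
    (g * x * g⁻¹).IsSwap := by
  obtain ⟨p, q, hpq, rfl⟩ := hx
  exact ⟨g p, g q, g.injective.ne hpq, (swap_apply_apply g p q).symm⟩

theorem Equiv.Perm.IsSwap.eq_swap_apply_self {x : Perm α} (hx : x.IsSwap) {ω : α}
    (hω : x ω ≠ ω) : x = swap (x ω) ω := by
  obtain ⟨p, q, hpq, rfl⟩ := hx
  by_cases hp : ω = p
  · subst hp; simp [swap_comm]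
  by_cases hq : ω = q
  · subst hq; simp
  · simp [swap_apply_of_ne_of_ne hp hq] at hω

theorem Equiv.Perm.IsSwap.eq_of_natCard_le_two [Finite α] (h : Nat.card α ≤ 2) {x y : Perm α}
    (hx : x.IsSwap) (hy : y.IsSwap) : x = y := by
  have := Fintype.ofFinite α
  by_contra hxy
  have h3 : ({1, x, y} : Finset (Perm α)).card = 3 :=
    Finset.card_eq_three.2 ⟨1, x, y, hx.isCycle.ne_one.symm, hy.isCycle.ne_one.symm, hxy, rfl⟩
  have hle := Finset.card_le_univ ({1, x, y} : Finset (Perm α))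
  rw [Fintype.card_perm, h3] at hle
  rw [Nat.card_eq_fintype_card] at h
  have := Nat.factorial_le h
  rw [Nat.factorial_two] at this
  omega

theorem ListHurwitzEquiv.forall_isSwap_iff {l l' : List (Perm α)} (h : l ≈ₕ l') :
    (∀ x ∈ l, x.IsSwap) ↔ ∀ x ∈ l', x.IsSwap :=
  h.forall_mem_iff fun g _ hx => hx.conj g

-- Collapsing `ω` onto `a` maps each orbit of `⟨swap a ω, m⟩` into an orbit of `⟨m⟩`.
theorem GeneratesTransitive.exists_mem_closure_apply_eq {a ω : α} {m : List (Perm α)}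
    (hm : ∀ g ∈ m, g ω = ω) (htr : GeneratesTransitive (swap a ω :: m)) {u v : α} (hu : u ≠ ω)
    (hv : v ≠ ω) : ∃ p ∈ Subgroup.closure {g | g ∈ m}, p u = v := by
  set H := Subgroup.closure {g | g ∈ m}
  let f : α → α := fun x => if x = ω then a else x
  let r : Setoid α := (MulAction.orbitRel H α).comap f
  have hr : ∀ g ∈ {g | g ∈ swap a ω :: m}, ∀ x, r (g x) x := by
    intro g hg x
    rw [Setoid.comap_rel, MulAction.orbitRel_apply]
    rcases List.mem_cons.1 hg with rfl | hgm
    · have : f (swap a ω x) = f x := by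
        unfold f
        by_cases hxa : x = a <;> by_cases hxω : x = ω <;> simp_all [swap_apply_of_ne_of_ne]
      rw [this]
      exact MulAction.mem_orbit_self _
    · by_cases hx : x = ω
      · subst hx; rw [hm g hgm]; exact MulAction.mem_orbit_self _
      · have hgx : g x ≠ ω := fun h => hx (g.injective (h.trans (hm g hgm).symm))
        simp only [f, if_neg hx, if_neg hgx]
        exact ⟨⟨g, Subgroup.subset_closure hgm⟩, rfl⟩
  obtain ⟨p, hp, rfl⟩ := htr u v
  have := rel_apply_of_mem_closure r hr hp u
  rw [Setoid.comap_rel, MulAction.orbitRel_apply] at this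
  obtain ⟨⟨h, hh⟩, hhu⟩ := this
  exact ⟨h, hh, by simpa [f, hu, hv] using hhu⟩

theorem GeneratesTransitive.exists_mem_closure_apply_ne (h3 : 3 ≤ ENat.card α) {a ω : α}
    (ha : a ≠ ω) {t : List (Perm α)} (htr : GeneratesTransitive (swap a ω :: t)) {z : Perm α}
    (hz : z ∈ t) (hzs : z.IsSwap) (hzω : z ω ≠ ω) :
    ∃ h ∈ Subgroup.closure {g | g ∈ t}, h a ≠ ω ∧ h ω ≠ ω := by
  by_cases hza : z ω = a
  · have htr' : GeneratesTransitive t := htr.mono <| List.cons_subset.2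
      ⟨by rwa [← hza, ← hzs.eq_swap_apply_self hzω], List.Subset.refl t⟩
    obtain ⟨v, hva, hvω⟩ := ENat.exists_ne_ne_of_three_le h3 a ω
    obtain ⟨g, hg, hgv⟩ := htr' v ω
    exact ⟨g, hg, fun h => hva (g.injective (hgv.trans h.symm)),
      fun h => hvω (g.injective (hgv.trans h.symm))⟩
  · refine ⟨z, Subgroup.subset_closure hz, ?_, hzω⟩
    rwa [hzs.eq_swap_apply_self hzω, swap_apply_of_ne_of_ne (Ne.symm hza) ha]

end Swap

section NormalForm

variable {α : Type*} [DecidableEq α]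

theorem ListHurwitzEquiv.exists_moving_append_fixing (ω : α) (l : List (Perm α)) :
    ∃ L m, l ≈ₕ L ++ m ∧ (∀ x ∈ L, x ω ≠ ω) ∧ ∀ y ∈ m, y ω = ω := by
  induction l with
  | nil => exact ⟨[], [], by rfl, by simp, by simp⟩
  | cons x l ih =>
    obtain ⟨L, m, h, hL, hm⟩ := ih
    by_cases hx : x ω = ω
    · refine ⟨L.map (fun y => x * y * x⁻¹), x :: m, ?_, fun z hz => ?_, by simpa [hx]⟩
      · simpa using (h.cons x).trans ((cons_map_conj x L).append_right m)
      · obtain ⟨y, hy, rfl⟩ := List.mem_map.1 hz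
        exact (conj_apply_ne_iff hx).2 (hL y hy)
    · exact ⟨x :: L, m, h.cons x, by simpa [hx], hm⟩

theorem ListHurwitzEquiv.swap_cons_swap {a b ω : α} (hb : b ≠ ω) (hab : b ≠ a)
    (l : List (Perm α)) : swap a ω :: swap b ω :: l ≈ₕ swap b a :: swap a ω :: l := by
  have hconj : swap a ω * swap b ω * (swap a ω)⁻¹ = swap b a := by
    rw [← swap_apply_apply, swap_apply_of_ne_of_ne hab hb, swap_apply_right]
  simpa only [hconj] using move (swap a ω) (swap b ω) l

theorem GeneratesTransitive.exists_pair_equiv_append_pair (h3 : 3 ≤ ENat.card α) {b ω : α}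
    (hb : b ≠ ω) {L m : List (Perm α)} (htr : GeneratesTransitive (swap b ω :: (L ++ m)))
    {z : Perm α} (hz : z ∈ L) (hzs : z.IsSwap) (hzω : z ω ≠ ω) :
    ∃ c : Perm α, c ω = ω ∧ swap b ω :: swap b ω :: (L ++ m) ≈ₕ L ++ c :: c :: m := by
  obtain ⟨h, hh, hhb, hhω⟩ :=
    htr.exists_mem_closure_apply_ne h3 hb (List.mem_append_left m hz) hzs hzω
  have hconj : h * swap b ω * h⁻¹ = swap (h b) (h ω) := (swap_apply_apply h b ω).symm
  refine ⟨swap (h b) (h ω), swap_apply_of_ne_of_ne hhb.symm hhω.symm, ?_⟩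
  calc swap b ω :: swap b ω :: (L ++ m)
      ≈ₕ swap (h b) (h ω) :: swap (h b) (h ω) :: (L ++ m) := by
        simpa only [hconj] using ListHurwitzEquiv.pair_conj_of_mem_closure hh (swap_mul_self b ω)
    _ ≈ₕ L ++ swap (h b) (h ω) :: swap (h b) (h ω) :: m :=
        ListHurwitzEquiv.pair_append (swap_mul_self _ _) _ _

def HasNormalForm (ω : α) (l : List (Perm α)) : Prop :=
  ∃ a ≠ ω, ∃ m, (∀ y ∈ m, y ω = ω) ∧ (l ≈ₕ swap a ω :: m ∨ l ≈ₕ swap a ω :: swap a ω :: m)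

theorem HasNormalForm.of_equiv {ω : α} {l l' : List (Perm α)} (h : l ≈ₕ l')
    (hl' : HasNormalForm ω l') : HasNormalForm ω l := by
  obtain ⟨a, ha, m, hm, h' | h'⟩ := hl'
  · exact ⟨a, ha, m, hm, Or.inl (h.trans h')⟩
  · exact ⟨a, ha, m, hm, Or.inr (h.trans h')⟩

theorem hasNormalForm_append (h3 : 3 ≤ ENat.card α) (ω : α) {L m : List (Perm α)}
    (hL : L ≠ []) (hLω : ∀ x ∈ L, x ω ≠ ω) (hmω : ∀ y ∈ m, y ω = ω)
    (hsw : ∀ x ∈ L ++ m, x.IsSwap) (htr : GeneratesTransitive (L ++ m)) :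
    HasNormalForm ω (L ++ m) := by
  induction hn : L.length using Nat.strong_induction_on generalizing L m with
  | _ n ih =>
  have recurse : ∀ L' m', L'.length < n → L' ≠ [] → (∀ x ∈ L', x ω ≠ ω) →
      (∀ y ∈ m', y ω = ω) → L ++ m ≈ₕ L' ++ m' → HasNormalForm ω (L ++ m) :=
    fun L' m' hlt hL' hL'ω hm'ω h => .of_equiv h <| ih _ hlt hL' hL'ω hm'ω
      (h.forall_isSwap_iff.1 hsw) (h.generatesTransitive_iff.1 htr) rfl
  rcases L with _ | ⟨x, L⟩
  · exact absurd rfl hL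
  obtain ⟨a, ha, rfl⟩ : ∃ a ≠ ω, x = swap a ω :=
    ⟨x ω, hLω x (by simp), (hsw x (by simp)).eq_swap_apply_self (hLω x (by simp))⟩
  rcases L with _ | ⟨y, L⟩
  · exact ⟨a, ha, m, hmω, Or.inl (by rfl)⟩
  obtain ⟨b, hb, rfl⟩ : ∃ b ≠ ω, y = swap b ω :=
    ⟨y ω, hLω y (by simp), (hsw y (by simp)).eq_swap_apply_self (hLω y (by simp))⟩
  by_cases hab : b = a
  · subst hab
    rcases L with _ | ⟨z, L⟩
    · exact ⟨b, hb, m, hmω, Or.inr (by rfl)⟩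
    have htr' : GeneratesTransitive (swap b ω :: (z :: L ++ m)) :=
      htr.mono fun w hw => by simp only [List.cons_append, List.mem_cons] at hw ⊢; tauto
    obtain ⟨c, hcω, h⟩ := htr'.exists_pair_equiv_append_pair h3 hb List.mem_cons_self
      (hsw z (by simp)) (hLω z (by simp))
    exact recurse (z :: L) (c :: c :: m) (by simp [← hn]) (by simp)
      (fun w hw => hLω w (by simp_all)) (by simpa [hcω] using hmω) h
  · have hcω : swap b a ω = ω := swap_apply_of_ne_of_ne hb.symm ha.symm
    refine recurse ((swap a ω :: L).map (fun w => swap b a * w * (swap b a)⁻¹)) (swap b a :: m)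
      (by simp [← hn]) (by simp) (fun w hw => ?_) (by simpa [hcω] using hmω) ?_
    · obtain ⟨w, hwL, rfl⟩ := List.mem_map.1 hw
      exact (conj_apply_ne_iff hcω).2 (hLω w (by simp only [List.mem_cons] at hwL ⊢; tauto))
    calc swap a ω :: swap b ω :: (L ++ m) ≈ₕ swap b a :: swap a ω :: (L ++ m) :=
          ListHurwitzEquiv.swap_cons_swap hb hab _
      _ ≈ₕ _ := by
          simpa using
            (ListHurwitzEquiv.cons_map_conj (swap b a) (swap a ω :: L)).append_right m

theorem hasNormalForm (h3 : 3 ≤ ENat.card α) (ω : α) {l : List (Perm α)}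
    (hsw : ∀ x ∈ l, x.IsSwap) (htr : GeneratesTransitive l) : HasNormalForm ω l := by
  obtain ⟨L, m, h, hL, hm⟩ := ListHurwitzEquiv.exists_moving_append_fixing ω l
  have htr' := h.generatesTransitive_iff.1 htr
  obtain ⟨v, hv, -⟩ := ENat.exists_ne_ne_of_three_le h3 ω ω
  obtain ⟨x, hx, hxω⟩ := htr'.exists_apply_ne hv
  have hLne : L ≠ [] := by
    rintro rfl
    exact hxω (hm x hx)
  exact .of_equiv h (hasNormalForm_append h3 ω hLne hL hm (h.forall_isSwap_iff.1 hsw) htr')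

theorem HasNormalForm.exists_equiv_cons_swap {ω : α} {l : List (Perm α)}
    (h : HasNormalForm ω l) (hμ : l.prod ω ≠ ω) :
    ∃ m, (∀ y ∈ m, y ω = ω) ∧ l ≈ₕ swap (l.prod ω) ω :: m := by
  obtain ⟨a, -, m, hm, h' | h'⟩ := h
  · rw [h'.prod_eq, List.prod_cons, Perm.mul_apply, list_prod_apply_eq_self hm, swap_apply_right]
    exact ⟨m, hm, h'⟩
  · simp [h'.prod_eq, ← mul_assoc, list_prod_apply_eq_self hm] at hμ

theorem HasNormalForm.exists_equiv_pair {ω : α} {l : List (Perm α)} (h : HasNormalForm ω l)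
    (hμ : l.prod ω = ω) (htr : GeneratesTransitive l) {b : α} (hb : b ≠ ω) :
    ∃ m, (∀ y ∈ m, y ω = ω) ∧ l ≈ₕ swap b ω :: swap b ω :: m := by
  obtain ⟨a, ha, m, hm, h' | h'⟩ := h
  · simp [h'.prod_eq, list_prod_apply_eq_self hm, ha] at hμ
  have htr' : GeneratesTransitive (swap a ω :: m) :=
    (h'.generatesTransitive_iff.1 htr).mono fun w hw => by
      simp only [List.mem_cons] at hw ⊢; tauto
  obtain ⟨g, hg, hga⟩ := htr'.exists_mem_closure_apply_eq hm ha hb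
  have hconj : g * swap a ω * g⁻¹ = swap b ω := by
    rw [← swap_apply_apply, hga, apply_eq_of_mem_closure hm hg]
  refine ⟨m, hm, h'.trans ?_⟩
  simpa only [hconj] using ListHurwitzEquiv.pair_conj_of_mem_closure hg (swap_mul_self a ω)

end NormalForm

section Induction

variable {α : Type*} [DecidableEq α]

theorem exists_map_ofSubtype {ω : α} {m : List (Perm α)} (hm : ∀ y ∈ m, y.IsSwap ∧ y ω = ω) :
    ∃ m' : List (Perm {x // x ≠ ω}), (∀ y ∈ m', y.IsSwap) ∧ m'.map ofSubtype = m := by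
  induction m with
  | nil => exact ⟨[], by simp, rfl⟩
  | cons y m ih =>
    obtain ⟨m', hm'sw, rfl⟩ := ih fun z hz => hm z (by simp [hz])
    obtain ⟨⟨p, q, hpq, rfl⟩, hω⟩ := hm y (by simp)
    have hp : p ≠ ω := by rintro rfl; exact hpq (by simpa using hω.symm)
    have hq : q ≠ ω := by rintro rfl; exact hpq (by simpa using hω)
    refine ⟨swap ⟨p, hp⟩ ⟨q, hq⟩ :: m', ?_, by simp⟩
    exact List.forall_mem_cons.2 ⟨⟨_, _, by simpa using hpq, rfl⟩, hm'sw⟩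

theorem GeneratesTransitive.of_cons_swap_map_ofSubtype {a ω : α} {m : List (Perm {x // x ≠ ω})}
    (h : GeneratesTransitive (swap a ω :: m.map ofSubtype)) : GeneratesTransitive m := by
  intro u v
  obtain ⟨p, hp, hpuv⟩ := h.exists_mem_closure_apply_eq
    (by simp [ofSubtype_apply_of_not_mem]) u.2 v.2
  have himage : {g | g ∈ m.map ofSubtype} = ofSubtype '' {g | g ∈ m} := by ext; simp
  rw [himage, ← MonoidHom.map_closure, Subgroup.mem_map] at hp
  obtain ⟨p', hp', rfl⟩ := hp
  exact ⟨p', hp', Subtype.ext (by rwa [ofSubtype_apply_coe] at hpuv)⟩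

def HurwitzConnected (α : Type*) [DecidableEq α] : Prop :=
  ∀ s t : List (Perm α), (∀ x ∈ s, x.IsSwap) → (∀ x ∈ t, x.IsSwap) → GeneratesTransitive s →
    GeneratesTransitive t → s.length = t.length → s.prod = t.prod → s ≈ₕ t

theorem HurwitzConnected.equiv_of_equiv_append {ω a : α} (ih : HurwitzConnected {x // x ≠ ω})
    {P s t ms mt : List (Perm α)} (hP : ∀ x ∈ P, x = swap a ω) (hms : ∀ y ∈ ms, y ω = ω)
    (hmt : ∀ y ∈ mt, y ω = ω) (hS : s ≈ₕ P ++ ms) (hT : t ≈ₕ P ++ mt)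
    (hs : ∀ x ∈ s, x.IsSwap) (ht : ∀ x ∈ t, x.IsSwap) (hstr : GeneratesTransitive s)
    (httr : GeneratesTransitive t) (hlen : s.length = t.length) (hprod : s.prod = t.prod) :
    s ≈ₕ t := by
  have hsub : ∀ m, P ++ m ⊆ swap a ω :: m := fun m w hw => by
    rcases List.mem_append.1 hw with hw | hw
    · exact hP w hw ▸ List.mem_cons_self
    · exact List.mem_cons_of_mem _ hw
  obtain ⟨ms', hms', rfl⟩ := exists_map_ofSubtype fun y hy =>
    ⟨hS.forall_isSwap_iff.1 hs y (List.mem_append_right _ hy), hms y hy⟩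
  obtain ⟨mt', hmt', rfl⟩ := exists_map_ofSubtype fun y hy =>
    ⟨hT.forall_isSwap_iff.1 ht y (List.mem_append_right _ hy), hmt y hy⟩
  have hlen' : ms'.length = mt'.length := by
    simpa using hS.length_eq.symm.trans (hlen.trans hT.length_eq)
  have hprod' : ms'.prod = mt'.prod := by
    have := hS.prod_eq.symm.trans (hprod.trans hT.prod_eq)
    simp only [List.prod_append, mul_right_inj, ← map_list_prod] at this
    exact ofSubtype_injective this
  have h := ih ms' mt' hms' hmt'
    ((hS.generatesTransitive_iff.1 hstr).mono (hsub _)).of_cons_swap_map_ofSubtype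
    ((hT.generatesTransitive_iff.1 httr).mono (hsub _)).of_cons_swap_map_ofSubtype hlen' hprod'
  exact (hS.trans ((h.map ofSubtype).append_left P)).trans hT.symm

theorem HurwitzConnected.of_subtype (h3 : 3 ≤ ENat.card α) (ω : α)
    (ih : HurwitzConnected {x // x ≠ ω}) : HurwitzConnected α := by
  intro s t hs ht hstr httr hlen hprod
  have hS := hasNormalForm h3 ω hs hstr
  have hT := hasNormalForm h3 ω ht httr
  by_cases hμ : s.prod ω = ω
  · obtain ⟨b, hb, -⟩ := ENat.exists_ne_ne_of_three_le h3 ω ω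
    obtain ⟨ms, hms, hS'⟩ := hS.exists_equiv_pair hμ hstr hb
    obtain ⟨mt, hmt, hT'⟩ := hT.exists_equiv_pair (hprod ▸ hμ) httr hb
    exact ih.equiv_of_equiv_append (a := b) (P := [swap b ω, swap b ω]) (by simp) hms hmt
      hS' hT' hs ht hstr httr hlen hprod
  · obtain ⟨ms, hms, hS'⟩ := hS.exists_equiv_cons_swap hμ
    obtain ⟨mt, hmt, hT'⟩ := hT.exists_equiv_cons_swap (hprod ▸ hμ)
    rw [← hprod] at hT'
    exact ih.equiv_of_equiv_append (a := s.prod ω) (P := [swap (s.prod ω) ω]) (by simp) hms hmt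
      hS' hT' hs ht hstr httr hlen hprod

theorem hurwitzConnected_of_natCard_le_two [Finite α] (h : Nat.card α ≤ 2) :
    HurwitzConnected α := by
  intro s t hs ht _ _ hlen _
  rw [List.ext_getElem hlen fun i h₁ h₂ =>
    (hs _ (List.getElem_mem h₁)).eq_of_natCard_le_two h (ht _ (List.getElem_mem h₂))]

theorem hurwitzConnected (α : Type*) [Finite α] [DecidableEq α] : HurwitzConnected α := by
  induction h : Nat.card α using Nat.strong_induction_on generalizing α with
  | _ n ih =>
  rcases le_or_gt n 2 with h2 | h2
  · exact hurwitzConnected_of_natCard_le_two (h ▸ h2)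
  obtain ⟨ω⟩ : Nonempty α := (Nat.card_pos_iff.1 (by omega)).1
  refine .of_subtype ?_ ω (ih _ ?_ _ rfl)
  · rw [ENat.card_eq_coe_natCard, h]
    exact_mod_cast h2
  · exact h ▸ Finite.card_subtype_lt (p := (· ≠ ω)) (not_not.2 rfl)

end Induction

theorem hurwitz_equiv_of_prod_eq_general (d n : ℕ)
    (s t : Fin n → Equiv.Perm (Fin d))
    (hs : ∀ j, (s j).IsSwap) (ht : ∀ j, (t j).IsSwap)
    (hstrans : ∀ x y : Fin d, ∃ p ∈ Subgroup.closure (Set.range s), p x = y)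
    (httrans : ∀ x y : Fin d, ∃ p ∈ Subgroup.closure (Set.range t), p x = y)
    (hprod : (List.ofFn s).prod = (List.ofFn t).prod) :
    HurwitzEquiv s t := by
  have hrange : ∀ u : Fin n → Perm (Fin d), {x | x ∈ List.ofFn u} = Set.range u := fun u => by
    ext; simp
  have h := hurwitzConnected (Fin d) (List.ofFn s) (List.ofFn t) (by simpa using hs)
    (by simpa using ht) (by rwa [GeneratesTransitive, hrange])
    (by rwa [GeneratesTransitive, hrange]) (by simp) hprod
  simpa [tupleOfList_ofFn] using h.hurwitzEquiv_tupleOfList List.length_ofFn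

/-- Two transitive `n`-tuples of transpositions in `S_d` with the same total
monodromy are Hurwitz equivalent: the set `T(μ)` of labelings with fixed
product `μ` forms a single connected component of the coloured braid
groupoid. -/
theorem hurwitz_equiv_of_prod_eq (d n : ℕ) (hd : 2 ≤ d)
    (s t : Fin n → Equiv.Perm (Fin d))
    (hs : ∀ j, (s j).IsSwap) (ht : ∀ j, (t j).IsSwap)
    (hstrans : ∀ x y : Fin d, ∃ p ∈ Subgroup.closure (Set.range s), p x = y)
    (httrans : ∀ x y : Fin d, ∃ p ∈ Subgroup.closure (Set.range t), p x = y)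
    (hprod : (List.ofFn s).prod = (List.ofFn t).prod) :
    HurwitzEquiv s t :=
  hurwitz_equiv_of_prod_eq_general d n s t hs ht hstrans httrans hprod
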